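/- arXiv:2101.03253 — 5 statements merged into one kernel-verified Lean document; each statement's English description precedes it below -/
import Mathlib

section
/- Let Θ ⊆ ℝ^{n_θ} be convex, θ ∈ Θ, and let θ̂: ℝ₊ → Θ be differentiable at t with θ̇̂(t) = [−λ_e K(t)ᵀ e_obs(t)]_{T_Θ(θ̂(t))}, where e_obs(t) = K(t)(θ̂(t) − θ) and λ_e(t) ≥ 0. Then d/dt ‖θ̂(t) − θ‖² ≤ −2 λ_e(t) ‖e_obs(t)‖² ≤ 0. -/
/-!
The tangent cone `T` of a convex set is a closed convex cone, so the projection `d` of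
`v = -λ Kᵀ e_obs` onto `T` satisfies `⟪v - d, w⟫ ≤ 0` for every `w ∈ T`. Taking `w = θ - θ̂`
gives `⟪θ̂ - θ, d⟫ ≤ ⟪θ̂ - θ, v⟫ = -λ ‖K (θ̂ - θ)‖²`, and the left side is half the derivative
of `‖θ̂ - θ‖²`.
-/

open scoped RealInnerProductSpace

/-- Tangent cone to a set `S` at `x`: closure of `{h (z - x) : z ∈ S, h > 0}`. -/
def tanCone {n : ℕ} (S : Set (EuclideanSpace ℝ (Fin n))) (x : EuclideanSpace ℝ (Fin n)) :
    Set (EuclideanSpace ℝ (Fin n)) :=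
  closure {y | ∃ z ∈ S, ∃ h : ℝ, 0 < h ∧ y = h • (z - x)}

/-- Normal cone to a set `S` at `x`. -/
def normalCone {n : ℕ} (S : Set (EuclideanSpace ℝ (Fin n))) (x : EuclideanSpace ℝ (Fin n)) :
    Set (EuclideanSpace ℝ (Fin n)) :=
  {v | ∀ w ∈ tanCone S x, ⟪v, w⟫ ≤ 0}

/-- `p` is the Euclidean projection of `v` onto `C`. -/
def IsProjOn {n : ℕ} (C : Set (EuclideanSpace ℝ (Fin n))) (v p : EuclideanSpace ℝ (Fin n)) :
    Prop :=
  p ∈ C ∧ ∀ w ∈ C, ‖p - v‖ ≤ ‖w - v‖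

open scoped Pointwise

variable {n : ℕ}

theorem tanCone_eq_closure_hull {Θ : Set (EuclideanSpace ℝ (Fin n))} (hΘ : Convex ℝ Θ)
    (x : EuclideanSpace ℝ (Fin n)) :
    tanCone Θ x = (ConvexCone.hull ℝ (-x +ᵥ Θ)).closure := by
  rw [ConvexCone.coe_closure, ConvexCone.coe_hull_of_convex (hΘ.vadd _), tanCone]
  congr 1
  ext y
  simp only [Set.mem_ofPred_eq, Set.mem_smul_set, Set.mem_vadd_set, vadd_eq_add]
  constructor
  · rintro ⟨z, hz, c, hc, rfl⟩
    exact ⟨c, hc, z - x, ⟨z, hz, neg_add_eq_sub x z⟩, rfl⟩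
  · rintro ⟨c, hc, _, ⟨z, hz, rfl⟩, rfl⟩
    exact ⟨z, hz, c, hc, by rw [neg_add_eq_sub]⟩

theorem sub_mem_tanCone {Θ : Set (EuclideanSpace ℝ (Fin n))} {x z : EuclideanSpace ℝ (Fin n)}
    (hz : z ∈ Θ) : z - x ∈ tanCone Θ x :=
  subset_closure ⟨z, hz, 1, one_pos, (one_smul ℝ _).symm⟩

theorem IsProjOn.inner_sub_le_zero {C : Set (EuclideanSpace ℝ (Fin n))} (hC : Convex ℝ C)
    {v p w : EuclideanSpace ℝ (Fin n)} (hp : IsProjOn C v p) (hw : w ∈ C) :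
    ⟪v - p, w - p⟫ ≤ 0 := by
  have : Nonempty C := ⟨⟨p, hp.1⟩⟩
  refine (norm_eq_iInf_iff_real_inner_le_zero hC hp.1).1 (le_antisymm ?_ ?_) w hw
  · exact le_ciInf fun w => by simpa only [norm_sub_rev] using hp.2 w w.2
  · have hbdd : BddBelow (Set.range fun w : C => ‖v - (w : EuclideanSpace ℝ (Fin n))‖) :=
      ⟨0, Set.forall_mem_range.2 fun _ => norm_nonneg _⟩
    exact ciInf_le hbdd ⟨p, hp.1⟩

theorem IsProjOn.sub_mem_normalCone {Θ : Set (EuclideanSpace ℝ (Fin n))} (hΘ : Convex ℝ Θ)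
    {x v p : EuclideanSpace ℝ (Fin n)} (hp : IsProjOn (tanCone Θ x) v p) :
    v - p ∈ normalCone Θ x := by
  intro w hw
  rw [tanCone_eq_closure_hull hΘ] at hp hw
  set T := (ConvexCone.hull ℝ (-x +ᵥ Θ)).closure
  have hp_le : ⟪v - p, p⟫ ≤ 0 := by
    simpa [two_smul] using hp.inner_sub_le_zero T.convex (T.smul_mem two_pos hp.1)
  have hvar := hp.inner_sub_le_zero T.convex hw
  rw [inner_sub_right] at hvar
  linarith

theorem stmt_4_general {nθ m : ℕ}
    (Θ : Set (EuclideanSpace ℝ (Fin nθ))) (hΘ : Convex ℝ Θ)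
    (θ : EuclideanSpace ℝ (Fin nθ)) (hθ : θ ∈ Θ)
    (θhat : ℝ → EuclideanSpace ℝ (Fin nθ))
    (K : EuclideanSpace ℝ (Fin nθ) →L[ℝ] EuclideanSpace ℝ (Fin m))
    (lam t : ℝ) (hlam : 0 ≤ lam)
    (d : EuclideanSpace ℝ (Fin nθ))
    (hd : IsProjOn (tanCone Θ (θhat t))
      ((-lam) • (ContinuousLinearMap.adjoint K) (K (θhat t - θ))) d)
    (hder : HasDerivAt θhat d t) :
    HasDerivAt (fun s => ‖θhat s - θ‖ ^ 2) (2 * ⟪θhat t - θ, d⟫) t ∧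
    2 * ⟪θhat t - θ, d⟫ ≤ -2 * lam * ‖K (θhat t - θ)‖ ^ 2 ∧
    -2 * lam * ‖K (θhat t - θ)‖ ^ 2 ≤ 0 := by
  set e := θhat t - θ
  have hnormal := hd.sub_mem_normalCone hΘ (θ - θhat t) (sub_mem_tanCone hθ)
  have hgrad : ⟪(-lam) • (ContinuousLinearMap.adjoint K) (K e), e⟫ = -lam * ‖K e‖ ^ 2 := by
    rw [real_inner_smul_left, ContinuousLinearMap.adjoint_inner_left, real_inner_self_eq_norm_sq]
  have hθe : θ - θhat t = -e := (neg_sub _ _).symm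
  rw [hθe, inner_neg_right, inner_sub_left, real_inner_comm e d] at hnormal
  refine ⟨(hder.sub_const θ).norm_sq, by linarith, ?_⟩
  linarith [mul_nonneg hlam (sq_nonneg ‖K e‖)]

/-- Along the projected-gradient estimation dynamics, the squared estimation error is
nonincreasing: its derivative is at most `-2 * lam * ‖e_obs‖ ^ 2 ≤ 0`. -/
theorem stmt_4 {nθ m : ℕ}
    (Θ : Set (EuclideanSpace ℝ (Fin nθ))) (hΘ : Convex ℝ Θ)
    (θ : EuclideanSpace ℝ (Fin nθ)) (hθ : θ ∈ Θ)
    (θhat : ℝ → EuclideanSpace ℝ (Fin nθ)) (hmem : ∀ s, θhat s ∈ Θ)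
    (K : EuclideanSpace ℝ (Fin nθ) →L[ℝ] EuclideanSpace ℝ (Fin m))
    (lam t : ℝ) (hlam : 0 ≤ lam)
    (d : EuclideanSpace ℝ (Fin nθ))
    (hd : IsProjOn (tanCone Θ (θhat t))
      ((-lam) • (ContinuousLinearMap.adjoint K) (K (θhat t - θ))) d)
    (hder : HasDerivAt θhat d t) :
    HasDerivAt (fun s => ‖θhat s - θ‖ ^ 2) (2 * ⟪θhat t - θ, d⟫) t ∧
    2 * ⟪θhat t - θ, d⟫ ≤ -2 * lam * ‖K (θhat t - θ)‖ ^ 2 ∧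
    -2 * lam * ‖K (θhat t - θ)‖ ^ 2 ≤ 0 :=
  stmt_4_general Θ hΘ θ hθ θhat K lam t hlam d hd hder
end

section
/- Let Θ ⊆ ℝⁿ be convex, θ ∈ Θ, and let θ̂ ∈ Θ satisfy θ̇̂ = [−λ_e Kᵀ e_obs]_{T_Θ(θ̂)}, where e_obs = K(θ̂ − θ) + e_f with ‖e_f‖ ≤ ε_f, λ_e ∈ {0, λ_θ} with λ_θ > 0, and ‖e_obs‖ > ε′_obs whenever λ_e = λ_θ, where ε′_obs > ε_f. Then d/dt ‖θ̂ − θ‖² ≤ −2 λ_e (e_obs − e_f)ᵀ e_obs ≤ 0, and if λ_e = λ_θ then d/dt ‖θ̂ − θ‖² ≤ −2 λ_θ (ε′_obs − ε_f) ε′_obs < 0. -/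
open scoped RealInnerProductSpace

/-! The tangent cone of a convex set is closed under addition and contains every `θ - x` with
`θ ∈ Θ`, so the ray `d + s • (θ - x)`, `s > 0`, stays in it. Since `d` is the point of the cone
nearest to `v`, the first-order condition along this ray gives `⟪v - d, θ - x⟫ ≤ 0`.
For `v = -λ Kᵀ e_obs` this is `⟪d, x - θ⟫ ≤ -λ ⟪e_obs - e_f, e_obs⟫`, and Cauchy–Schwarz bounds
the right-hand side. -/

section InnerProduct

variable {E : Type*} [NormedAddCommGroup E] [InnerProductSpace ℝ E]

theorem inner_sub_nonneg_of_forall_norm_le_of_ray {C : Set E} {v p w : E}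
    (hmin : ∀ y ∈ C, ‖p - v‖ ≤ ‖y - v‖) (hray : ∀ s : ℝ, 0 < s → p + s • w ∈ C) :
    0 ≤ ⟪p - v, w⟫ := by
  have hslope : ∀ s : ℝ, 0 < s → 0 ≤ 2 * ⟪p - v, w⟫ + s * ‖w‖ ^ 2 := by
    intro s hs
    have hle := hmin _ (hray s hs)
    have hexp : ‖p + s • w - v‖ ^ 2 = ‖p - v‖ ^ 2 + s * (2 * ⟪p - v, w⟫ + s * ‖w‖ ^ 2) := by
      rw [show p + s • w - v = (p - v) + s • w by abel, norm_add_sq_real, real_inner_smul_right,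
        norm_smul, Real.norm_eq_abs, mul_pow, sq_abs]
      ring
    have hsq : ‖p - v‖ ^ 2 ≤ ‖p + s • w - v‖ ^ 2 := pow_le_pow_left₀ (norm_nonneg _) hle 2
    rw [hexp] at hsq
    exact nonneg_of_mul_nonneg_right (by linarith) hs
  have hlim : Filter.Tendsto (fun s : ℝ => 2 * ⟪p - v, w⟫ + s * ‖w‖ ^ 2)
      (nhdsWithin 0 (Set.Ioi 0)) (nhds (2 * ⟪p - v, w⟫)) := by
    apply tendsto_nhdsWithin_of_tendsto_nhds
    simpa using ((continuous_id.mul continuous_const).const_add (2 * ⟪p - v, w⟫)).tendsto 0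
  have := ge_of_tendsto hlim (eventually_nhdsWithin_of_forall hslope)
  linarith

theorem mul_sub_le_inner_sub_self {e f : E} {a b : ℝ} (hf : ‖f‖ ≤ a) (hab : a ≤ b)
    (he : b ≤ ‖e‖) : (b - a) * b ≤ ⟪e - f, e⟫ := by
  have hcs : ⟪f, e⟫ ≤ ‖f‖ * ‖e‖ := real_inner_le_norm f e
  rw [inner_sub_left, real_inner_self_eq_norm_sq]
  nlinarith [norm_nonneg f]

end InnerProduct

section TangentCone

variable {n : ℕ} {Θ : Set (EuclideanSpace ℝ (Fin n))} {x : EuclideanSpace ℝ (Fin n)}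

theorem smul_sub_mem_tanCone {z : EuclideanSpace ℝ (Fin n)} (hz : z ∈ Θ) {h : ℝ} (hh : 0 < h) :
    h • (z - x) ∈ tanCone Θ x :=
  subset_closure ⟨z, hz, h, hh, rfl⟩

theorem add_mem_tanCone (hΘ : Convex ℝ Θ) {y y' : EuclideanSpace ℝ (Fin n)}
    (hy : y ∈ tanCone Θ x) (hy' : y' ∈ tanCone Θ x) : y + y' ∈ tanCone Θ x := by
  refine map_mem_closure₂ continuous_add hy hy' ?_
  rintro _ ⟨z, hz, h, hh, rfl⟩ _ ⟨z', hz', h', hh', rfl⟩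
  have hsum : 0 < h + h' := add_pos hh hh'
  -- `h (z - x) + h' (z' - x) = (h + h') (z'' - x)` for the convex combination `z''` of `z, z'`
  refine ⟨(h / (h + h')) • z + (h' / (h + h')) • z', ?_, h + h', hsum, ?_⟩
  · exact hΘ hz hz' (by positivity) (by positivity) (by field_simp)
  · simp only [smul_sub, smul_add, smul_smul, mul_div_cancel₀ _ hsum.ne']
    module

theorem IsProjOn.inner_le_inner_of_mem (hΘ : Convex ℝ Θ) {θ v d : EuclideanSpace ℝ (Fin n)}
    (hθ : θ ∈ Θ) (hd : IsProjOn (tanCone Θ x) v d) : ⟪x - θ, d⟫ ≤ ⟪x - θ, v⟫ := by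
  have hray := inner_sub_nonneg_of_forall_norm_le_of_ray hd.2
    fun _ hs => add_mem_tanCone hΘ hd.1 (smul_sub_mem_tanCone hθ hs)
  rw [← neg_sub x θ, inner_neg_right, inner_sub_left] at hray
  rw [real_inner_comm d, real_inner_comm v]
  linarith

end TangentCone

theorem stmt_10_general {n m : ℕ}
    (Θ : Set (EuclideanSpace ℝ (Fin n))) (hΘ : Convex ℝ Θ)
    (θ : EuclideanSpace ℝ (Fin n)) (hθ : θ ∈ Θ)
    (θhat : ℝ → EuclideanSpace ℝ (Fin n))
    (K : EuclideanSpace ℝ (Fin n) →L[ℝ] EuclideanSpace ℝ (Fin m))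
    (ef eobs : EuclideanSpace ℝ (Fin m))
    (εf ε'obs lamθ lam t : ℝ)
    (heobs : eobs = K (θhat t - θ) + ef)
    (hef : ‖ef‖ ≤ εf)
    (hlamθ : 0 < lamθ) (hlam : lam = 0 ∨ lam = lamθ)
    (hobs : lam = lamθ → ε'obs < ‖eobs‖)
    (hεf : εf < ε'obs)
    (d : EuclideanSpace ℝ (Fin n))
    (hd : IsProjOn (tanCone Θ (θhat t)) ((-lam) • (ContinuousLinearMap.adjoint K) eobs) d)
    (hder : HasDerivAt θhat d t) :
    HasDerivAt (fun s => ‖θhat s - θ‖ ^ 2) (2 * ⟪θhat t - θ, d⟫) t ∧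
    2 * ⟪θhat t - θ, d⟫ ≤ -2 * lam * ⟪eobs - ef, eobs⟫ ∧
    -2 * lam * ⟪eobs - ef, eobs⟫ ≤ 0 ∧
    (lam = lamθ →
      2 * ⟪θhat t - θ, d⟫ ≤ -2 * lamθ * (ε'obs - εf) * ε'obs ∧
      -2 * lamθ * (ε'obs - εf) * ε'obs < 0) := by
  set v := (-lam) • (ContinuousLinearMap.adjoint K) eobs
  have hv : ⟪θhat t - θ, v⟫ = -lam * ⟪eobs - ef, eobs⟫ := by
    rw [real_inner_smul_right, ContinuousLinearMap.adjoint_inner_right, heobs,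
      add_sub_cancel_right]
  have hdescent : ⟪θhat t - θ, d⟫ ≤ -lam * ⟪eobs - ef, eobs⟫ := by
    rw [← hv]
    exact hd.inner_le_inner_of_mem hΘ hθ
  have hgap : lam = lamθ → (ε'obs - εf) * ε'obs ≤ ⟪eobs - ef, eobs⟫ :=
    fun h => mul_sub_le_inner_sub_self hef hεf.le (hobs h).le
  have hgap_pos : 0 < (ε'obs - εf) * ε'obs :=
    mul_pos (sub_pos.2 hεf) ((norm_nonneg ef).trans_lt (hef.trans_lt hεf))
  refine ⟨(hder.sub_const θ).norm_sq, by linarith, ?_, fun h => ⟨?_, by nlinarith⟩⟩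
  · rcases hlam with rfl | h
    · simp
    · nlinarith [hgap h]
  · nlinarith [hgap h]

/-- With model mismatch bounded by `εf`, the squared estimation error still decreases
along the estimation dynamics, strictly whenever adaptation is on. -/
theorem stmt_10 {n m : ℕ}
    (Θ : Set (EuclideanSpace ℝ (Fin n))) (hΘ : Convex ℝ Θ)
    (θ : EuclideanSpace ℝ (Fin n)) (hθ : θ ∈ Θ)
    (θhat : ℝ → EuclideanSpace ℝ (Fin n)) (hmem : ∀ s, θhat s ∈ Θ)
    (K : EuclideanSpace ℝ (Fin n) →L[ℝ] EuclideanSpace ℝ (Fin m))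
    (ef eobs : EuclideanSpace ℝ (Fin m))
    (εf ε'obs lamθ lam t : ℝ)
    (heobs : eobs = K (θhat t - θ) + ef)
    (hef : ‖ef‖ ≤ εf)
    (hlamθ : 0 < lamθ) (hlam : lam = 0 ∨ lam = lamθ)
    (hobs : lam = lamθ → ε'obs < ‖eobs‖)
    (hεf : εf < ε'obs)
    (d : EuclideanSpace ℝ (Fin n))
    (hd : IsProjOn (tanCone Θ (θhat t)) ((-lam) • (ContinuousLinearMap.adjoint K) eobs) d)
    (hder : HasDerivAt θhat d t) :
    HasDerivAt (fun s => ‖θhat s - θ‖ ^ 2) (2 * ⟪θhat t - θ, d⟫) t ∧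
    2 * ⟪θhat t - θ, d⟫ ≤ -2 * lam * ⟪eobs - ef, eobs⟫ ∧
    -2 * lam * ⟪eobs - ef, eobs⟫ ≤ 0 ∧
    (lam = lamθ →
      2 * ⟪θhat t - θ, d⟫ ≤ -2 * lamθ * (ε'obs - εf) * ε'obs ∧
      -2 * lamθ * (ε'obs - εf) * ε'obs < 0) :=
  stmt_10_general Θ hΘ θ hθ θhat K ef eobs εf ε'obs lamθ lam t heobs hef hlamθ hlam hobs hεf d hd
    hder
end

section
/- Suppose e_obs(s) = K(s)(θ̂_T − θ) + e_f(s) with ‖e_f(s)‖ ≤ ε_f for all s ∈ [T, T + τ₀], the PE condition ∫_T^{T+τ₀} K(s)ᵀK(s) ds ⪰ α₀ I holds, ‖e_obs(s)‖ < ε_obs on the interval, and ε_obs ≤ ε_θ √(α₀/τ₀) − ε_f with ε_θ > 2 ε_f √(τ₀/α₀). Then ‖θ̂_T − θ‖ < ε_θ. -/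
open MeasureTheory Set

/-! On the window the regressor error is controlled pointwise,
`‖K s (θ̂_T - θ)‖ ≤ ‖e_obs s‖ + ‖e_f s‖ < ε_obs + ε_f ≤ ε_θ √(α₀/τ₀)`. Integrating the square over
the window and comparing with the persistent-excitation lower bound gives
`α₀ ‖θ̂_T - θ‖² < τ₀ ε_θ² α₀/τ₀ = α₀ ε_θ²`. -/

-- A non-integrable `f` has integral `0`, and then `0 ≤ f < C` gives `C > 0`.
theorem intervalIntegral.integral_lt_sub_mul_of_nonneg_of_lt {f : ℝ → ℝ} {a b C : ℝ} (hab : a < b)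
    (hf₀ : ∀ x ∈ Ioo a b, 0 ≤ f x) (hfC : ∀ x ∈ Ioo a b, f x < C) :
    ∫ x in a..b, f x < (b - a) * C := by
  by_cases hf : IntervalIntegrable f volume a b
  · have hgap : 0 < ∫ x in a..b, (C - f x) :=
      intervalIntegral_pos_of_pos_on (intervalIntegrable_const.sub hf)
        (fun x hx => sub_pos.2 (hfC x hx)) hab
    rw [integral_sub intervalIntegrable_const hf, integral_const, smul_eq_mul] at hgap
    linarith
  · have hmid : (a + b) / 2 ∈ Ioo a b := ⟨by linarith, by linarith⟩
    have hC : 0 < C := (hf₀ _ hmid).trans_lt (hfC _ hmid)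
    rw [integral_undef hf]
    exact mul_pos (sub_pos.2 hab) hC

theorem stmt_12_general {m n : ℕ} (T τ₀ α₀ εf εθ εobs : ℝ)
    (hτ : 0 < τ₀) (hα : 0 < α₀)
    (K : ℝ → EuclideanSpace ℝ (Fin n) →L[ℝ] EuclideanSpace ℝ (Fin m))
    (ef eobs : ℝ → EuclideanSpace ℝ (Fin m))
    (θT θ : EuclideanSpace ℝ (Fin n))
    (heq : ∀ s ∈ Set.Icc T (T + τ₀), eobs s = K s (θT - θ) + ef s)
    (hef : ∀ s ∈ Set.Icc T (T + τ₀), ‖ef s‖ ≤ εf)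
    (hPE : ∀ x : EuclideanSpace ℝ (Fin n),
      α₀ * ‖x‖ ^ 2 ≤ ∫ s in T..(T + τ₀), ‖K s x‖ ^ 2)
    (hbnd : ∀ s ∈ Set.Icc T (T + τ₀), ‖eobs s‖ < εobs)
    (hε : εobs ≤ εθ * Real.sqrt (α₀ / τ₀) - εf) :
    ‖θT - θ‖ < εθ := by
  set c := εθ * Real.sqrt (α₀ / τ₀)
  have hK : ∀ s ∈ Icc T (T + τ₀), ‖K s (θT - θ)‖ < c := fun s hs => calc
    ‖K s (θT - θ)‖ = ‖eobs s - ef s‖ := by rw [heq s hs, add_sub_cancel_right]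
    _ ≤ ‖eobs s‖ + ‖ef s‖ := norm_sub_le _ _
    _ < εobs + εf := add_lt_add_of_lt_of_le (hbnd s hs) (hef s hs)
    _ ≤ c := by linarith
  have hc : 0 < c := (norm_nonneg _).trans_lt (hK T ⟨le_rfl, by linarith⟩)
  have hεθ : 0 < εθ := pos_of_mul_pos_left hc (Real.sqrt_nonneg _)
  have hτc : τ₀ * c ^ 2 = α₀ * εθ ^ 2 := by
    rw [mul_pow, Real.sq_sqrt (by positivity)]
    field_simp
  have hsq : α₀ * ‖θT - θ‖ ^ 2 < α₀ * εθ ^ 2 := calc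
    α₀ * ‖θT - θ‖ ^ 2 ≤ ∫ s in T..(T + τ₀), ‖K s (θT - θ)‖ ^ 2 := hPE _
    _ < (T + τ₀ - T) * c ^ 2 :=
      intervalIntegral.integral_lt_sub_mul_of_nonneg_of_lt (by linarith) (fun _ _ => by positivity)
        fun s hs => pow_lt_pow_left₀ (hK s (Ioo_subset_Icc_self hs)) (norm_nonneg _) two_ne_zero
    _ = α₀ * εθ ^ 2 := by rw [add_sub_cancel_left, hτc]
  exact lt_of_pow_lt_pow_left₀ 2 hεθ.le (lt_of_mul_lt_mul_left hsq hα.le)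

/-- Persistent excitation with bounded model mismatch: a small observation error on
`[T, T+τ₀]` still implies a small parameter estimation error. -/
theorem stmt_12 {m n : ℕ} (T τ₀ α₀ εf εθ εobs : ℝ)
    (hτ : 0 < τ₀) (hα : 0 < α₀) (hεf : 0 < εf) (hεobs : 0 < εobs)
    (K : ℝ → EuclideanSpace ℝ (Fin n) →L[ℝ] EuclideanSpace ℝ (Fin m))
    (ef eobs : ℝ → EuclideanSpace ℝ (Fin m))
    (θT θ : EuclideanSpace ℝ (Fin n))
    (heq : ∀ s ∈ Set.Icc T (T + τ₀), eobs s = K s (θT - θ) + ef s)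
    (hef : ∀ s ∈ Set.Icc T (T + τ₀), ‖ef s‖ ≤ εf)
    (hintK : IntervalIntegrable (fun s => ‖K s (θT - θ)‖ ^ 2) volume T (T + τ₀))
    (hintf : IntervalIntegrable (fun s => ‖ef s‖ ^ 2) volume T (T + τ₀))
    (hPE : ∀ x : EuclideanSpace ℝ (Fin n),
      α₀ * ‖x‖ ^ 2 ≤ ∫ s in T..(T + τ₀), ‖K s x‖ ^ 2)
    (hbnd : ∀ s ∈ Set.Icc T (T + τ₀), ‖eobs s‖ < εobs)
    (hεθ : 2 * εf * Real.sqrt (τ₀ / α₀) < εθ)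
    (hε : εobs ≤ εθ * Real.sqrt (α₀ / τ₀) - εf) :
    ‖θT - θ‖ < εθ :=
  stmt_12_general T τ₀ α₀ εf εθ εobs hτ hα K ef eobs θT θ heq hef hPE hbnd hε
end

section
/- Let S ⊆ ℝⁿ be a compact convex set and g: S → ℝⁿ continuous. Define G(z) := {g(z) − w : w ∈ N_S(z)} ∩ B(g(z), ‖g(z) − [g(z)]_{T_S(z)}‖), the intersection of the translate of the negative normal cone with the closed ball centered at g(z) of radius equal to the distance from g(z) to the tangent cone. Then for every z ∈ S and every w ∈ G(z), we have g(z)ᵀ w ≥ ‖[g(z)]_{T_S(z)}‖². -/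
/-! The projection `p` of `g z` onto the convex cone `T_S(z)` is orthogonal to the residual
`g z - p`. Writing `w = g z - u` with `u ∈ N_S(z)`, we get
`⟪g z, w⟫ = ‖p‖² + (‖g z - p‖² - ⟪g z - p, u⟫) - ⟪p, u⟫`; the middle term is nonnegative by
Cauchy–Schwarz because `‖u‖ = ‖w - g z‖ ≤ ‖g z - p‖`, and `⟪p, u⟫ ≤ 0` because `p ∈ T_S(z)`. -/

open scoped RealInnerProductSpace

section InnerProductSpace

variable {E : Type*} [NormedAddCommGroup E] [InnerProductSpace ℝ E]

theorem real_inner_sub_sub_nonpos_of_forall_norm_sub_le {K : Set E} (hK : Convex ℝ K)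
    {v p : E} (hp : p ∈ K) (hmin : ∀ y ∈ K, ‖p - v‖ ≤ ‖y - v‖) :
    ∀ y ∈ K, ⟪v - p, y - p⟫ ≤ 0 := by
  have : Nonempty K := ⟨⟨p, hp⟩⟩
  refine (norm_eq_iInf_iff_real_inner_le_zero hK hp).mp (le_antisymm ?_ ?_)
  · exact le_ciInf fun y ↦ by simpa only [norm_sub_rev v] using hmin y y.2
  · exact ciInf_le ⟨0, by rintro r ⟨y, rfl⟩; positivity⟩ (⟨p, hp⟩ : K)

theorem real_inner_sub_self_eq_zero_of_forall_norm_sub_le {K : Set E} (hK : Convex ℝ K)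
    (hsmul : ∀ c : ℝ, 0 ≤ c → ∀ x ∈ K, c • x ∈ K)
    {v p : E} (hp : p ∈ K) (hmin : ∀ y ∈ K, ‖p - v‖ ≤ ‖y - v‖) :
    ⟪v - p, p⟫ = 0 := by
  have hvar := real_inner_sub_sub_nonpos_of_forall_norm_sub_le hK hp hmin
  have h_zero : ⟪v - p, (0 : ℝ) • p - p⟫ ≤ 0 := hvar _ (hsmul 0 le_rfl p hp)
  have h_two : ⟪v - p, (2 : ℝ) • p - p⟫ ≤ 0 := hvar _ (hsmul 2 zero_le_two p hp)
  rw [zero_smul, zero_sub, inner_neg_right] at h_zero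
  rw [two_smul, add_sub_cancel_right] at h_two
  linarith

theorem sq_norm_le_real_inner_sub {v p u : E} (horth : ⟪v - p, p⟫ = 0) (hup : ⟪u, p⟫ ≤ 0)
    (hu : ‖u‖ ≤ ‖v - p‖) :
    ‖p‖ ^ 2 ≤ ⟪v, v - u⟫ := by
  have hcs : ⟪v - p, u⟫ ≤ ‖v - p‖ ^ 2 :=
    (real_inner_le_norm _ _).trans (by nlinarith [norm_nonneg (v - p), norm_nonneg u])
  have hexpand : ⟪v, v - u⟫ = ‖p‖ ^ 2 + (‖v - p‖ ^ 2 - ⟪v - p, u⟫) - ⟪u, p⟫ + 2 * ⟪v - p, p⟫ := by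
    simp only [← real_inner_self_eq_norm_sq, inner_sub_left, inner_sub_right]
    rw [real_inner_comm p v, real_inner_comm u p]
    ring
  linarith

end InnerProductSpace

section TangentCone

variable {n : ℕ} {S : Set (EuclideanSpace ℝ (Fin n))}

theorem convex_tanCone (hconv : Convex ℝ S) (x : EuclideanSpace ℝ (Fin n)) :
    Convex ℝ (tanCone S x) := by
  apply Convex.closure
  rintro y₁ ⟨z₁, hz₁, h₁, h₁pos, rfl⟩ y₂ ⟨z₂, hz₂, h₂, h₂pos, rfl⟩ a b ha hb hab
  rcases ha.eq_or_lt with rfl | ha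
  · rw [zero_add] at hab
    subst hab
    exact ⟨z₂, hz₂, h₂, h₂pos, by simp⟩
  rcases hb.eq_or_lt with rfl | hb
  · rw [add_zero] at hab
    subst hab
    exact ⟨z₁, hz₁, h₁, h₁pos, by simp⟩
  -- `a h₁ (z₁ - x) + b h₂ (z₂ - x) = c (z - x)` with `z` the `(a h₁ : b h₂)`-average of `z₁, z₂`
  set c := a * h₁ + b * h₂ with hc
  have hcpos : 0 < c := by positivity
  refine ⟨(a * h₁ / c) • z₁ + (b * h₂ / c) • z₂,
    hconv hz₁ hz₂ (by positivity) (by positivity) (by rw [← add_div, div_self hcpos.ne']), c, hcpos, ?_⟩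
  have h₁' : c * (a * h₁ / c) = a * h₁ := by field_simp
  have h₂' : c * (b * h₂ / c) = b * h₂ := by field_simp
  simp only [smul_sub, smul_smul, smul_add]
  rw [h₁', h₂', hc]
  module

theorem smul_mem_tanCone {x : EuclideanSpace ℝ (Fin n)} (hx : x ∈ S) {c : ℝ} (hc : 0 ≤ c)
    {y : EuclideanSpace ℝ (Fin n)} (hy : y ∈ tanCone S x) : c • y ∈ tanCone S x := by
  rcases hc.eq_or_lt with rfl | hc
  · rw [zero_smul]
    exact subset_closure ⟨x, hx, 1, one_pos, by simp⟩
  refine Set.MapsTo.closure ?_ (continuous_const_smul c) hy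
  rintro _ ⟨z, hz, h, hpos, rfl⟩
  exact ⟨z, hz, c * h, mul_pos hc hpos, smul_smul c h (z - x)⟩

end TangentCone

theorem stmt_13_general {n : ℕ} (S : Set (EuclideanSpace ℝ (Fin n)))
    (hconv : Convex ℝ S)
    (g : EuclideanSpace ℝ (Fin n) → EuclideanSpace ℝ (Fin n))
    (z : EuclideanSpace ℝ (Fin n)) (hz : z ∈ S)
    (p : EuclideanSpace ℝ (Fin n)) (hp : IsProjOn (tanCone S z) (g z) p)
    (w : EuclideanSpace ℝ (Fin n))
    (hw₁ : ∃ u ∈ normalCone S z, w = g z - u)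
    (hw₂ : ‖w - g z‖ ≤ ‖g z - p‖) :
    ‖p‖ ^ 2 ≤ ⟪g z, w⟫ := by
  obtain ⟨u, hu, rfl⟩ := hw₁
  obtain ⟨hp_mem, hp_min⟩ := hp
  have horth : ⟪g z - p, p⟫ = 0 :=
    real_inner_sub_self_eq_zero_of_forall_norm_sub_le (convex_tanCone hconv z)
      (fun _ hc _ hy ↦ smul_mem_tanCone hz hc hy) hp_mem hp_min
  have hu_norm : ‖u‖ ≤ ‖g z - p‖ := by
    rwa [sub_sub_cancel_left, norm_neg] at hw₂
  exact sq_norm_le_real_inner_sub horth (hu p hp_mem) hu_norm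

/-- For the set-valued extension `G z` of the projected vector field, every element
`w` of `G z` satisfies `inner (g z) w ≥ ‖p‖ ^ 2`, where `p` projects `g z` onto the
tangent cone. -/
theorem stmt_13 {n : ℕ} (S : Set (EuclideanSpace ℝ (Fin n)))
    (hS : IsCompact S) (hconv : Convex ℝ S)
    (g : EuclideanSpace ℝ (Fin n) → EuclideanSpace ℝ (Fin n)) (hg : ContinuousOn g S)
    (z : EuclideanSpace ℝ (Fin n)) (hz : z ∈ S)
    (p : EuclideanSpace ℝ (Fin n)) (hp : IsProjOn (tanCone S z) (g z) p)
    (w : EuclideanSpace ℝ (Fin n))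
    (hw₁ : ∃ u ∈ normalCone S z, w = g z - u)
    (hw₂ : ‖w - g z‖ ≤ ‖g z - p‖) :
    ‖p‖ ^ 2 ≤ ⟪g z, w⟫ :=
  stmt_13_general S hconv g z hz p hp w hw₁ hw₂
end

section
/- Let S ⊆ ℝⁿ be compact and convex and g: S → ℝⁿ continuous. Then the map z ↦ ‖g(z) − [g(z)]_{T_S(z)}‖ (the distance from g(z) to the tangent cone T_S(z)) is upper semicontinuous on S. -/
open scoped RealInnerProductSpace

/-!
The tangent cone is the closure of the cone of feasible directions `h • (w - z)` (`w ∈ S`,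
`h > 0`), and the distance to a set is the distance to its closure. A feasible direction
`h • (w - x)` at `x` is approximated at nearby `z` by `h • (w - z)`, so the feasible directions
depend lower hemicontinuously on the base point, and the distance from a continuously moving
point to a lower hemicontinuous family of sets is upper semicontinuous.
-/

open Metric

theorem LowerHemicontinuousWithinAt.upperSemicontinuousWithinAt_infDist {α β : Type*}
    [TopologicalSpace α] [PseudoMetricSpace β] {f : α → β} {C : α → Set β} {s : Set α} {x : α}
    (hC : LowerHemicontinuousWithinAt C s x) (hne : (C x).Nonempty)
    (hf : ContinuousWithinAt f s x) :
    UpperSemicontinuousWithinAt (fun z => infDist (f z) (C z)) s x := by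
  intro y hy
  obtain ⟨v, hv, hfv⟩ := (infDist_lt_iff hne).1 hy
  have hε : 0 < (y - dist (f x) v) / 2 := by linarith
  have hC_near := lowerHemicontinuousWithinAt_iff.1 hC _ isOpen_ball ⟨v, hv, mem_ball_self hε⟩
  filter_upwards [hf.eventually (ball_mem_nhds (f x) hε), hC_near] with z hfz ⟨w, hw, hwv⟩
  rw [mem_ball] at hwv
  calc infDist (f z) (C z) ≤ dist (f z) w := infDist_le_dist_of_mem hw
    _ ≤ dist (f z) (f x) + dist (f x) v + dist v w := dist_triangle4 _ _ _ _
    _ < y := by rw [dist_comm v w]; linarith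

section FeasibleDirections

variable {E : Type*} [AddCommGroup E] [Module ℝ E]

def feasibleDirections (S : Set E) (x : E) : Set E :=
  {y | ∃ z ∈ S, ∃ h : ℝ, 0 < h ∧ y = h • (z - x)}

theorem zero_mem_feasibleDirections {S : Set E} {x : E} (hx : x ∈ S) :
    (0 : E) ∈ feasibleDirections S x :=
  ⟨x, hx, 1, one_pos, by simp⟩

theorem lowerHemicontinuous_feasibleDirections [TopologicalSpace E] [IsTopologicalAddGroup E]
    [ContinuousConstSMul ℝ E] (S : Set E) : LowerHemicontinuous (feasibleDirections S) := by
  refine fun x => lowerHemicontinuousAt_iff.2 ?_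
  rintro u hu ⟨_, ⟨w, hw, h, hh, rfl⟩, hxu⟩
  have hcont : Continuous fun z : E => h • (w - z) := by fun_prop
  filter_upwards [hcont.continuousAt.preimage_mem_nhds (hu.mem_nhds hxu)] with z hz
  exact ⟨h • (w - z), ⟨w, hw, h, hh, rfl⟩, hz⟩

end FeasibleDirections

theorem stmt_15_general {n : ℕ} (S : Set (EuclideanSpace ℝ (Fin n)))
    (g : EuclideanSpace ℝ (Fin n) → EuclideanSpace ℝ (Fin n)) (hg : ContinuousOn g S) :
    UpperSemicontinuousOn (fun z => Metric.infDist (g z) (tanCone S z)) S := by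
  intro x hx
  simp only [tanCone, infDist_closure]
  exact ((lowerHemicontinuous_feasibleDirections S).lowerHemicontinuousWithinAt S x
    ).upperSemicontinuousWithinAt_infDist ⟨0, zero_mem_feasibleDirections hx⟩ (hg x hx)

/-- The distance from `g z` to the tangent cone at `z` is upper semicontinuous on `S`. -/
theorem stmt_15 {n : ℕ} (S : Set (EuclideanSpace ℝ (Fin n)))
    (hS : IsCompact S) (hconv : Convex ℝ S)
    (g : EuclideanSpace ℝ (Fin n) → EuclideanSpace ℝ (Fin n)) (hg : ContinuousOn g S) :
    UpperSemicontinuousOn (fun z => Metric.infDist (g z) (tanCone S z)) S :=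
  stmt_15_general S g hg
end
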